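/- arXiv:0909.4027 — 3 statements merged into one kernel-verified Lean document; each statement's English description precedes it below -/
import Mathlib

section
/- Let X be a simplicial median set with complementary congruences ∼ and ≡ on it such that the intersection of the ∼-class of a and the ≡-class of b is nonempty for all a,b ∈ X. Then for all a ∈ X the map x ↦ (φ_a(x), ψ_a(x)) is an isomorphism of median sets X → ã × a^≡, where φ_a and ψ_a are the foldings (gate maps) onto the convex subsets ã (the ∼-class of a) and a^≡ (the ≡-class of a). -/
namespace ArtinMedian

/-- A median set: a set with a ternary median operation satisfying symmetry,
the absorptive law and the self-distributive law. -/
class MedianSet (X : Type*) where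
  med : X → X → X → X
  med_comm₁ : ∀ x y z, med x y z = med y x z
  med_comm₂ : ∀ x y z, med x y z = med x z y
  med_absorb : ∀ x y, med x y x = x
  med_distrib : ∀ x y z u v,
    med (med x y z) u v = med (med x u v) y (med z u v)

open MedianSet

variable {X : Type*} [MedianSet X]

/-- The interval (cell) `[a,b]` of a median set. -/
def minterval (a b : X) : Set X := {z | med a z b = z}

/-- A congruence on a median set: an equivalence relation compatible with the median. -/
def IsCong (r : X → X → Prop) : Prop :=
  Equivalence r ∧ ∀ a b x y, r x y → r (med a b x) (med a b y)

section Aux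

variable {X : Type*} [MedianSet X]

lemma med_right (a b : X) : med a b b = b := by
  rw [med_comm₁, med_absorb]

lemma med_left (a b : X) : med a a b = a := by
  rw [med_comm₂, med_absorb]

lemma cong3 {t : X → X → Prop} (hc : IsCong t) {x y : X} (a b : X)
    (h : t x y) : t (med a b x) (med a b y) := hc.2 a b x y h

lemma cong2 {t : X → X → Prop} (hc : IsCong t) {x y : X} (a b : X)
    (h : t x y) : t (med a x b) (med a y b) := by
  rw [med_comm₂ a x b, med_comm₂ a y b]; exact hc.2 a b x y h

lemma cong1 {t : X → X → Prop} (hc : IsCong t) {x y : X} (a b : X)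
    (h : t x y) : t (med x a b) (med y a b) := by
  rw [med_comm₁ x a b, med_comm₁ y a b, med_comm₂ a x b, med_comm₂ a y b]
  exact hc.2 a b x y h

lemma med_mem (a c x : X) : med a (med a c x) x = med a c x := by
  rw [med_comm₁ a (med a c x), med_distrib a c x a x, med_left, med_absorb]

/-- Key lemma: the gate `φ a x` is `s`-related to `x`. -/
lemma gate_rel {r s : X → X → Prop} (hr : IsCong r) (hs : IsCong s)
    (hmeet : ∀ x y : X, r x y → s x y → x = y)
    (hne : ∀ a b : X, ∃ c, r a c ∧ s b c)
    (φ : X → X → X)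
    (hφ : ∀ a x : X, r a (φ a x) ∧
      minterval a x ∩ {z | r a z} = minterval a (φ a x)) :
    ∀ a x : X, s x (φ a x) := by
  intro a x
  obtain ⟨c, rac, sxc⟩ := hne a x
  set m := med a c x with hm
  have hma : r a m := by
    have h := cong2 hr a x (hr.1.symm rac)
    rw [med_left] at h
    exact hr.1.symm h
  have hsxm : s x m := by
    have h := cong2 hs a x (hs.1.symm sxc)
    rw [med_right] at h
    exact hs.1.symm h
  have hmem : m ∈ minterval a x := med_mem a c x
  have hmφ : med a m (φ a x) = m := by
    have : m ∈ minterval a (φ a x) := by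
      rw [← (hφ a x).2]; exact ⟨hmem, hma⟩
    exact this
  have hφmem : med a (φ a x) x = φ a x := by
    have : φ a x ∈ minterval a x ∩ {z | r a z} := by
      rw [(hφ a x).2]; exact med_right a (φ a x)
    exact this.1
  have hq : med a (φ a x) m = φ a x := by
    apply hmeet
    · have h1 := cong3 hr a (φ a x) (hr.1.symm hma)
      have h2 := cong2 hr a a (hr.1.symm (hφ a x).1)
      rw [med_left] at h2
      have : r (med a (φ a x) m) a := by
        rw [med_absorb] at h1
        exact h1
      exact hr.1.trans this (hφ a x).1
    · have h := cong3 hs a (φ a x) (hs.1.symm hsxm)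
      rw [hφmem] at h
      exact h
  have hmφ' : m = φ a x := by
    rw [← hq, med_comm₂, hmφ]
  rw [← hmφ']
  exact hsxm

/-- The gate is uniquely characterized. -/
lemma gate_char {r s : X → X → Prop} (hr : IsCong r) (hs : IsCong s)
    (hmeet : ∀ x y : X, r x y → s x y → x = y)
    (hne : ∀ a b : X, ∃ c, r a c ∧ s b c)
    (φ : X → X → X)
    (hφ : ∀ a x : X, r a (φ a x) ∧
      minterval a x ∩ {z | r a z} = minterval a (φ a x)) :
    ∀ a x y : X, r a y → s x y → φ a x = y := by
  intro a x y ray sxy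
  apply hmeet
  · exact hr.1.trans (hr.1.symm (hφ a x).1) ray
  · exact hs.1.trans (hs.1.symm (gate_rel hr hs hmeet hne φ hφ a x)) sxy

end Aux

/-- if `X` is a simplicial median set with complementary congruences
`r` (∼) and `s` (≡) such that every ∼-class meets every ≡-class, then for each
`a ∈ X` the map `x ↦ (φ_a x, ψ_a x)` is an isomorphism of median sets from `X`
onto the product of the ∼-class of `a` and the ≡-class of `a`; here `φ_a`, `ψ_a`
are the foldings (gate maps) onto these convex classes. -/

theorem folding_product_iso {X : Type*} [MedianSet X]
    (hfin : ∀ a b : X, (minterval a b).Finite)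
    (r s : X → X → Prop) (hr : IsCong r) (hs : IsCong s)
    (hmeet : ∀ x y : X, r x y → s x y → x = y)
    (hjoin : ∀ t : X → X → Prop, IsCong t → (∀ x y, r x y → t x y) →
      (∀ x y, s x y → t x y) → ∀ x y, t x y)
    (hne : ∀ a b : X, ∃ c, r a c ∧ s b c)
    (φ ψ : X → X → X)
    (hφ : ∀ a x : X, r a (φ a x) ∧
      minterval a x ∩ {z | r a z} = minterval a (φ a x))
    (hψ : ∀ a x : X, s a (ψ a x) ∧
      minterval a x ∩ {z | s a z} = minterval a (ψ a x)) :
    ∀ a : X,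
      Function.Injective (fun x : X => (φ a x, ψ a x)) ∧
      (∀ y z : X, r a y → s a z → ∃ x : X, φ a x = y ∧ ψ a x = z) ∧
      (∀ x y z : X,
        φ a (MedianSet.med x y z) =
          MedianSet.med (φ a x) (φ a y) (φ a z) ∧
        ψ a (MedianSet.med x y z) =
          MedianSet.med (ψ a x) (ψ a y) (ψ a z)) := by
  intro a
  have hmeet' : ∀ x y : X, s x y → r x y → x = y := fun x y h1 h2 => hmeet x y h2 h1
  have hne' : ∀ a b : X, ∃ c, s a c ∧ r b c := fun a b => by
    obtain ⟨c, h1, h2⟩ := hne b a; exact ⟨c, h2, h1⟩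
  have φrel : ∀ a x : X, s x (φ a x) := gate_rel hr hs hmeet hne φ hφ
  have ψrel : ∀ a x : X, r x (ψ a x) := gate_rel hs hr hmeet' hne' ψ hψ
  have φchar : ∀ a x y : X, r a y → s x y → φ a x = y :=
    gate_char hr hs hmeet hne φ hφ
  have ψchar : ∀ a x y : X, s a y → r x y → ψ a x = y :=
    gate_char hs hr hmeet' hne' ψ hψ
  refine ⟨?_, ?_, ?_⟩
  · intro x x' h
    simp only [Prod.mk.injEq] at h
    apply hmeet
    · exact hr.1.trans (ψrel a x) (by rw [h.2]; exact hr.1.symm (ψrel a x'))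
    · exact hs.1.trans (φrel a x) (by rw [h.1]; exact hs.1.symm (φrel a x'))
  · intro y z ray saz
    obtain ⟨x, rzx, syx⟩ := hne z y
    exact ⟨x, φchar a x y ray (hs.1.symm syx), ψchar a x z saz (hr.1.symm rzx)⟩
  · intro x y z
    constructor
    · apply φchar
      · have h1 := cong1 hr (φ a y) (φ a z) (hr.1.symm (hφ a x).1)
        have h2 := cong2 hr a (φ a z) (hr.1.symm (hφ a y).1)
        rw [med_left] at h2
        exact hr.1.symm (hr.1.trans h1 h2)
      · have h1 := cong1 hs y z (φrel a x)
        have h2 := cong2 hs (φ a x) z (φrel a y)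
        have h3 := cong3 hs (φ a x) (φ a y) (φrel a z)
        exact hs.1.trans (hs.1.trans h1 h2) h3
    · apply ψchar
      · have h1 := cong1 hs (ψ a y) (ψ a z) (hs.1.symm (hψ a x).1)
        have h2 := cong2 hs a (ψ a z) (hs.1.symm (hψ a y).1)
        rw [med_left] at h2
        exact hs.1.symm (hs.1.trans h1 h2)
      · have h1 := cong1 hr y z (ψrel a x)
        have h2 := cong2 hr (ψ a x) z (ψrel a y)
        have h3 := cong3 hr (ψ a x) (ψ a y) (ψrel a z)
        exact hr.1.trans (hr.1.trans h1 h2) h3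

end ArtinMedian
end

section
/- Let X be a simplicial median set and ⪯ a preorder on X compatible with the median such that every pair of elements has an upper bound. For a,b ∈ X let U_{a,b} = {x ∈ [a,b] : a ⪯ x and b ⪯ x} (nonempty), and define a • b = the join of U_{a,b} in the lattice ([a,b], ≤_a). Then U_{a,b} equals the interval [a • b, b • a]. -/
namespace ArtinMedian

open MedianSet

variable {X : Type*} [MedianSet X]

/-- The semilattice order `≤_a` induced by `x ∨_a y = Y(x,a,y)`. -/
def leAt (a x y : X) : Prop := MedianSet.med x a y = y

lemma m13 (x y z : X) : med x y z = med z y x := by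
  rw [med_comm₁, med_comm₂, med_comm₁]

lemma mabs1 (x y : X) : med x y y = y := by
  rw [m13, med_comm₂, med_absorb]

lemma mabs2 (x y : X) : med x x y = x := by
  rw [med_comm₂, med_absorb]

lemma labs (a x z : X) : med (med x a z) a z = med x a z := by
  rw [med_comm₁ x a z, med_distrib, mabs2, med_absorb, med_comm₁]

lemma ltrans {a x y z : X} (hxy : med x a y = y) (hyz : med y a z = z) :
    med x a z = z := by
  have h : z = med (med x a y) a z := by rw [hxy, hyz]
  rw [med_distrib, hyz, labs] at h
  exact h.symm

lemma lantisymm {a x y : X} (hxy : med x a y = y) (hyx : med y a x = x) : x = y := by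
  rw [← hyx, m13, hxy]

lemma ljoin_left (a x y : X) : med x a (med x a y) = med x a y := by
  rw [m13 x a (med x a y), m13 x a y, labs]

lemma ljoin_right (a x y : X) : med y a (med x a y) = med x a y := by
  rw [m13 x a y]; exact ljoin_left a y x

lemma interval_med {a b p r : X} (q : X) (hp : med a p b = p) (hr : med a r b = r) :
    med a (med p q r) b = med p q r := by
  rw [med_comm₁ a (med p q r) b, med_distrib, med_comm₁ p a b, hp, med_comm₁ r a b, hr]

lemma Uclosed (pre : X → X → Prop)
    (htrans : ∀ x y z, pre x y → pre y z → pre x z)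
    (hcompat : ∀ a b x y : X, pre x y → pre (med a b x) (med a b y))
    {a b t s : X}
    (ht : med a t b = t) (hs : med a s b = s)
    (hbt : pre b t) (has : pre a s) (hbs : pre b s) :
    med a (med t a s) b = med t a s ∧ pre a (med t a s) ∧ pre b (med t a s) := by
  refine ⟨interval_med a ht hs, ?_, ?_⟩
  · have h := hcompat t a a s has
    rwa [mabs1] at h
  · have h1 : pre b (med s a b) := by
      have h := hcompat b a b s hbs
      rwa [med_absorb, m13 b a s] at h
    have h2 : pre (med s a b) (med t a s) := by
      have h := hcompat s a b t hbt
      rwa [m13 s a t] at h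
    exact htrans _ _ _ h1 h2

lemma exists_max (pre : X → X → Prop)
    (htrans : ∀ x y z, pre x y → pre y z → pre x z)
    (hcompat : ∀ a b x y : X, pre x y → pre (med a b x) (med a b y))
    (a b m : X) (hm : med a m b = m ∧ pre a m ∧ pre b m)
    (T : Finset X) : ∃ s, (med a s b = s ∧ pre a s ∧ pre b s) ∧
      ∀ u ∈ T, (med a u b = u ∧ pre a u ∧ pre b u) → med u a s = s := by
  classical
  induction T using Finset.induction_on with
  | empty => exact ⟨m, hm, by simp⟩
  | @insert t T htT ih =>
    obtain ⟨s, hsU, hs⟩ := ih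
    by_cases hU : med a t b = t ∧ pre a t ∧ pre b t
    · refine ⟨med t a s,
        Uclosed pre htrans hcompat hU.1 hsU.1 hU.2.2 hsU.2.1 hsU.2.2, ?_⟩
      intro u hu huU
      rcases Finset.mem_insert.mp hu with rfl | hu
      · exact ljoin_left a u s
      · exact ltrans (hs u hu huU) (ljoin_right a t s)
    · refine ⟨s, hsU, ?_⟩
      intro u hu huU
      rcases Finset.mem_insert.mp hu with rfl | hu
      · exact absurd huU hU
      · exact hs u hu huU

lemma join_mem (pre : X → X → Prop)
    (htrans : ∀ x y z, pre x y → pre y z → pre x z)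
    (hcompat : ∀ a b x y : X, pre x y → pre (med a b x) (med a b y))
    {a b : X}
    (hUfin : {x : X | med a x b = x ∧ pre a x ∧ pre b x}.Finite)
    (m : X) (hm : med a m b = m ∧ pre a m ∧ pre b m)
    (j : X) (h1 : med a j b = j)
    (h2 : ∀ u, med a u b = u → pre a u → pre b u → med u a j = j)
    (h3 : ∀ c, med a c b = c →
      (∀ u, med a u b = u → pre a u → pre b u → med u a c = c) → med j a c = c) :
    pre a j ∧ pre b j := by
  classical
  obtain ⟨s, hsU, hs⟩ := exists_max pre htrans hcompat a b m hm hUfin.toFinset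
  have hsj : med s a j = j := h2 s hsU.1 hsU.2.1 hsU.2.2
  have hjs : med j a s = s :=
    h3 s hsU.1 (fun u hu hau hbu =>
      hs u (hUfin.mem_toFinset.mpr ⟨hu, hau, hbu⟩) ⟨hu, hau, hbu⟩)
  have hje : j = s := lantisymm hjs hsj
  rw [hje]
  exact ⟨hsU.2.1, hsU.2.2⟩

/-- let `X` be a simplicial median set, `⪯` a preorder compatible
with the median in which every pair has an upper bound.  For `a b : X` let
`U_{a,b} = {x ∈ [a,b] | a ⪯ x ∧ b ⪯ x}`, and let `a • b` (resp. `b • a`) be the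
join of `U_{a,b}` in the lattice `([a,b], ≤_a)` (resp. `([a,b], ≤_b)`).
Then `U_{a,b} = [a • b, b • a]`. -/
theorem upper_set_eq_interval {X : Type*} [MedianSet X]
    (hfin : ∀ a b : X, (minterval a b).Finite)
    (pre : X → X → Prop)
    (hrefl : ∀ x, pre x x)
    (htrans : ∀ x y z, pre x y → pre y z → pre x z)
    (hcompat : ∀ a b x y : X, pre x y →
      pre (MedianSet.med a b x) (MedianSet.med a b y))
    (hub : ∀ x y : X, ∃ c, pre x c ∧ pre y c)
    (a b j₁ j₂ : X)
    (hj₁ : j₁ ∈ minterval a b ∧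
      (∀ u, u ∈ minterval a b → pre a u → pre b u → leAt a u j₁) ∧
      (∀ c, c ∈ minterval a b →
        (∀ u, u ∈ minterval a b → pre a u → pre b u → leAt a u c) →
        leAt a j₁ c))
    (hj₂ : j₂ ∈ minterval a b ∧
      (∀ u, u ∈ minterval a b → pre a u → pre b u → leAt b u j₂) ∧
      (∀ c, c ∈ minterval a b →
        (∀ u, u ∈ minterval a b → pre a u → pre b u → leAt b u c) →
        leAt b j₂ c)) :
    {x | x ∈ minterval a b ∧ pre a x ∧ pre b x} = minterval j₁ j₂ := by
  classical
  -- basic memberships as equations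
  have hj1I : med a j₁ b = j₁ := hj₁.1
  have hj2I : med a j₂ b = j₂ := hj₂.1
  -- a common upper bound inside the interval
  obtain ⟨c, hac, hbc⟩ := hub a b
  have hmI : med a (med a c b) b = med a c b := interval_med c (mabs2 a b) (mabs1 a b)
  have ham : pre a (med a c b) := by
    have h := hcompat a b a c hac
    rwa [med_absorb, med_comm₂ a b c] at h
  have hbm : pre b (med a c b) := by
    have h := hcompat a b b c hbc
    rwa [mabs1, med_comm₂ a b c] at h
  have hUfin : {x : X | med a x b = x ∧ pre a x ∧ pre b x}.Finite :=
    (hfin a b).subset (fun x hx => hx.1)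
  -- j₁ lies in U
  have hj1U : pre a j₁ ∧ pre b j₁ :=
    join_mem pre htrans hcompat hUfin (med a c b) ⟨hmI, ham, hbm⟩ j₁ hj1I
      (fun u hu hau hbu => hj₁.2.1 u hu hau hbu)
      (fun d hd hub' => hj₁.2.2 d hd hub')
  -- j₂ lies in U (swap the roles of a and b)
  have hUfin' : {x : X | med b x a = x ∧ pre b x ∧ pre a x}.Finite :=
    (hfin a b).subset (fun x hx => by
      have : med b x a = x := hx.1
      rw [m13] at this; exact this)
  have hj2U : pre b j₂ ∧ pre a j₂ := by
    refine join_mem pre htrans hcompat hUfin' (med a c b)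
      ⟨by rw [m13]; exact hmI, hbm, ham⟩ j₂ (by rw [m13]; exact hj2I)
      (fun u hu hbu hau => hj₂.2.1 u (by rw [m13] at hu; exact hu) hau hbu)
      (fun d hd hub' => hj₂.2.2 d (by rw [m13] at hd; exact hd)
        (fun u hu hau hbu => hub' u (by rw [m13]; exact hu) hbu hau))
  ext x
  show (med a x b = x ∧ pre a x ∧ pre b x) ↔ med j₁ x j₂ = x
  constructor
  · rintro ⟨hx, hax, hbx⟩
    have le1 : med x a j₁ = j₁ := hj₁.2.1 x hx hax hbx
    have le2 : med x b j₂ = j₂ := hj₂.2.1 x hx hax hbx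
    obtain ⟨w, hwdef⟩ : ∃ w, w = med j₁ x j₂ := ⟨_, rfl⟩
    have hwI : med a w b = w := by rw [hwdef]; exact interval_med x hj1I hj2I
    have step1 : med x a w = w := by
      rw [hwdef]
      conv_rhs => rw [← le1, med_distrib, mabs2]
    have step2 : med x b w = w := by
      rw [hwdef, m13 j₁ x j₂]
      conv_rhs => rw [← le2, med_distrib, mabs2]
    have hbaw : med b a w = w := by rw [med_comm₁ b a w, med_comm₂ a b w]; exact hwI
    have habw : med a b w = w := by rw [med_comm₂ a b w]; exact hwI
    have e1 : med x a w = med a x (med b a w) := by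
      conv_lhs => rw [← hx]
      rw [med_distrib, mabs2]
    have d1 : med a x w = w := by
      rw [hbaw] at e1
      exact e1.symm.trans step1
    have e2 : med x b w = med (med a b w) x b := by
      conv_lhs => rw [← hx]
      rw [med_distrib, mabs2]
    have d2 : med w x b = w := by
      rw [habw] at e2
      exact e2.symm.trans step2
    have d3 : w = x := by
      calc w = med a x w := d1.symm
        _ = med a x (med w x b) := by rw [d2]
        _ = med (med w x a) x (med b x a) := by
              rw [m13 a x (med w x b), med_distrib]
        _ = med w x (med a x b) := by rw [m13 w x a, d1, m13 b x a]
        _ = med w x x := by rw [hx]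
        _ = x := mabs1 w x
    rw [← hwdef]
    exact d3
  · intro hx2
    refine ⟨?_, ?_, ?_⟩
    · conv_lhs => rw [← hx2]
      rw [interval_med x hj1I hj2I, hx2]
    · have p1 : pre (med j₁ x a) x := by
        have h := hcompat j₁ x a j₂ hj2U.2
        rwa [hx2] at h
      have p2 : pre a (med j₁ x a) := by
        have h := hcompat a x a j₁ hj1U.1
        rwa [med_absorb, m13 a x j₁] at h
      exact htrans _ _ _ p2 p1
    · have p1 : pre (med j₁ x b) x := by
        have h := hcompat j₁ x b j₂ hj2U.1
        rwa [hx2] at h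
      have p2 : pre b (med j₁ x b) := by
        have h := hcompat b x b j₁ hj1U.2
        rwa [med_absorb, m13 b x j₁] at h
      exact htrans _ _ _ p2 p1


end ArtinMedian
end

section
/- In a ⊥-group G satisfying axioms A₁ and A₂, if x, y, z ∈ G satisfy xyz = x•y•z = z•y•x (both triples reduced) and x ∩ z = 1, then xy = yx, xz = zx, and yz = zy. -/
namespace ArtinMedian

/-- A median group, presented via a meet-semilattice operation `∩` (with induced
order `x ⊂ y ↔ x ∩ y = x`) satisfying: (1) `1 ⊂ x`; (2) `x ⊂ y → y ⊂ z →
z⁻¹y ⊂ z⁻¹x`; (3) `x⁻¹(x ∩ y) ⊂ x⁻¹y`. -/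
class MedianGroup (G : Type*) extends Group G where
  meet : G → G → G
  meet_comm : ∀ x y, meet x y = meet y x
  meet_assoc : ∀ x y z, meet (meet x y) z = meet x (meet y z)
  meet_idem : ∀ x, meet x x = x
  one_meet : ∀ x, meet 1 x = 1
  inv_mul_antitone : ∀ x y z, meet x y = x → meet y z = y →
    meet (z⁻¹ * y) (z⁻¹ * x) = z⁻¹ * y
  meet_axiom : ∀ x y, meet (x⁻¹ * meet x y) (x⁻¹ * y) = x⁻¹ * meet x y

namespace MedianGroup

variable {G : Type*} [MedianGroup G]

/-- The order `x ⊂ y` of a median group. -/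
def sub (x y : G) : Prop := meet x y = x

/-- `j` is the join (least upper bound) `x ∪ y`. -/
def isJoin (x y j : G) : Prop :=
  sub x j ∧ sub y j ∧ ∀ c, sub x c → sub y c → sub j c

/-- The join `x ∪ y` exists (`x ∪ y ≠ ∞`). -/
def hasJoin (x y : G) : Prop := ∃ j, isJoin x y j

/-- Orthogonality: `x ⊥ y` iff `x ∩ y = 1` and `x ∪ y` exists. -/
def orth (x y : G) : Prop := meet x y = 1 ∧ hasJoin x y

/-- `G` is a `⊥`-group: `x ⊥ y` implies `x ∪ y = xy`. -/
def PerpGroup (G : Type*) [MedianGroup G] : Prop :=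
  ∀ x y : G, orth x y → isJoin x y (x * y)

/-- Axiom A₁: `x ∪ y` exists and `x⁻¹ ⊂ y⁻¹` imply `x ⊂ y`. -/
def A1 (G : Type*) [MedianGroup G] : Prop :=
  ∀ x y : G, hasJoin x y → sub x⁻¹ y⁻¹ → sub x y

/-- Axiom A₂: `x ∩ y = x⁻¹ ∩ z = y⁻¹ ∩ z = 1` imply `xz ∩ yz ⊂ z`. -/
def A2 (G : Type*) [MedianGroup G] : Prop :=
  ∀ x y z : G, meet x y = 1 → meet x⁻¹ z = 1 → meet y⁻¹ z = 1 →
    sub (meet (x * z) (y * z)) z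

/-- Axiom A₄: if `x ∪ x⁻¹` exists then `x = 1`. -/
def A4 (G : Type*) [MedianGroup G] : Prop :=
  ∀ x : G, hasJoin x x⁻¹ → x = 1

/-- An A-group: a `⊥`-group satisfying A₁, A₂ and A₄. -/
def AGroup (G : Type*) [MedianGroup G] : Prop :=
  PerpGroup G ∧ A1 G ∧ A2 G ∧ A4 G

/-- The median of a median group: `Y(x,y,z) = x·((x⁻¹y) ∩ (x⁻¹z))`. -/
def medY (x y z : G) : G := x * meet (x⁻¹ * y) (x⁻¹ * z)

/-- The interval (cell) `[x,y]` of a median group. -/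
def interval (x y : G) : Set G := {z | sub (x⁻¹ * z) (x⁻¹ * y)}

/-- Convexity of a subset of a median group. -/
def IsConvex (C : Set G) : Prop :=
  ∀ x y z : G, x ∈ C → y ∈ C → medY x z y ∈ C

-- ### auxiliary lemmas

lemma aux_meet_sub_left (x y : G) : sub (meet x y) x := by
  show meet (meet x y) x = meet x y
  rw [meet_comm (meet x y) x, ← meet_assoc, meet_idem]

lemma aux_meet_sub_right (x y : G) : sub (meet x y) y := by
  show meet (meet x y) y = meet x y
  rw [meet_assoc, meet_idem]

lemma aux_sub_meet {c x y : G} (h1 : sub c x) (h2 : sub c y) : sub c (meet x y) := by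
  show meet c (meet x y) = c
  rw [← meet_assoc, h1, h2]

lemma aux_sub_trans {x y z : G} (h1 : sub x y) (h2 : sub y z) : sub x z := by
  have h : meet (meet x y) z = meet x y := by rw [meet_assoc, h2]
  rwa [h1] at h

lemma aux_sub_antisymm {x y : G} (h1 : sub x y) (h2 : sub y x) : x = y := by
  have h1' : meet x y = x := h1
  have h2' : meet y x = y := h2
  rw [← h1', meet_comm, h2']

lemma aux_meet_one {t : G} (h : sub t 1) : t = 1 :=
  aux_sub_antisymm h (one_meet t)

lemma aux_P1 {a b : G} (h : sub a b) : sub (b⁻¹ * a) b⁻¹ := by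
  have H := inv_mul_antitone 1 a b (one_meet a) h
  rwa [mul_one] at H

lemma aux_push {t b : G} (h : sub t b⁻¹) : sub (b * t) b := by
  have H := inv_mul_antitone 1 t b⁻¹ (one_meet t) h
  rwa [inv_inv, mul_one] at H

lemma aux_anti {a b c : G} (h1 : sub a b) (h2 : sub b c) : sub (c⁻¹ * b) (c⁻¹ * a) :=
  inv_mul_antitone a b c h1 h2

lemma aux_red_sub {a b : G} (h : meet a⁻¹ b = 1) : sub a (a * b) := by
  have H := meet_axiom a⁻¹ b
  rw [h, inv_inv, mul_one] at H
  exact H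

lemma aux_red_of_sub {a b : G} (h : sub a (a * b)) : meet a⁻¹ b = 1 := by
  have ht1 : sub (meet a⁻¹ b) a⁻¹ := aux_meet_sub_left _ _
  have ht2 : sub (meet a⁻¹ b) b := aux_meet_sub_right _ _
  have h3 : sub (a * meet a⁻¹ b) a := aux_push ht1
  have h4 := aux_anti h3 h
  have e1 : (a * b)⁻¹ * a = b⁻¹ := by group
  have e2 : (a * b)⁻¹ * (a * meet a⁻¹ b) = b⁻¹ * meet a⁻¹ b := by group
  rw [e1, e2] at h4
  have h5 : sub (b⁻¹ * meet a⁻¹ b) b⁻¹ := aux_P1 ht2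
  have h6 : b⁻¹ * meet a⁻¹ b = b⁻¹ := aux_sub_antisymm h5 h4
  exact mul_left_cancel (h6.trans (mul_one b⁻¹).symm)

lemma aux_isJoin_of_bounded {a b c : G} (ha : sub a c) (hb : sub b c) :
    isJoin a b (c * meet (c⁻¹ * a) (c⁻¹ * b)) := by
  have hda : sub (meet (c⁻¹*a) (c⁻¹*b)) (c⁻¹*a) := aux_meet_sub_left _ _
  have hdb : sub (meet (c⁻¹*a) (c⁻¹*b)) (c⁻¹*b) := aux_meet_sub_right _ _
  have hac : sub (c⁻¹*a) c⁻¹ := aux_P1 ha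
  have hbc : sub (c⁻¹*b) c⁻¹ := aux_P1 hb
  have hsa : sub a (c * meet (c⁻¹*a) (c⁻¹*b)) := by
    have H := aux_anti hda hac
    rw [inv_inv, show c * (c⁻¹*a) = a by group] at H
    exact H
  have hsb : sub b (c * meet (c⁻¹*a) (c⁻¹*b)) := by
    have H := aux_anti hdb hbc
    rw [inv_inv, show c * (c⁻¹*b) = b by group] at H
    exact H
  refine ⟨hsa, hsb, ?_⟩
  intro e hae hbe
  have h1 : sub (c⁻¹ * meet c e) (c⁻¹*a) := aux_anti (aux_sub_meet ha hae) (aux_meet_sub_left c e)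
  have h2 : sub (c⁻¹ * meet c e) (c⁻¹*b) := aux_anti (aux_sub_meet hb hbe) (aux_meet_sub_left c e)
  have h3 : sub (c⁻¹ * meet c e) (meet (c⁻¹*a) (c⁻¹*b)) := aux_sub_meet h1 h2
  have h4 : sub (meet (c⁻¹*a) (c⁻¹*b)) c⁻¹ := aux_sub_trans hda hac
  have H := aux_anti h3 h4
  rw [inv_inv, show c * (c⁻¹ * meet c e) = meet c e by group] at H
  exact aux_sub_trans H (aux_meet_sub_right c e)

lemma aux_hasJoin_of_bounded {a b c : G} (ha : sub a c) (hb : sub b c) : hasJoin a b :=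
  ⟨_, aux_isJoin_of_bounded ha hb⟩

lemma aux_isJoin_symm {a b j : G} (h : isJoin a b j) : isJoin b a j :=
  ⟨h.2.1, h.1, fun c h1 h2 => h.2.2 c h2 h1⟩

lemma aux_join_unique {a b j j' : G} (h : isJoin a b j) (h' : isJoin a b j') : j = j' :=
  aux_sub_antisymm (h.2.2 _ h'.1 h'.2.1) (h'.2.2 _ h.1 h.2.1)

lemma aux_perp_join (hP : PerpGroup G) {a b c : G} (hab : meet a b = 1)
    (ha : sub a c) (hb : sub b c) : isJoin a b (a * b) :=
  hP a b ⟨hab, aux_hasJoin_of_bounded ha hb⟩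

lemma aux_perp_meet1 (hP : PerpGroup G) {a b c : G} (hab : meet a b = 1)
    (ha : sub a c) (hb : sub b c) : meet a b⁻¹ = 1 := by
  have hba : meet b a = 1 := by rw [meet_comm]; exact hab
  have hjba : isJoin b a (b*a) := aux_perp_join hP hba hb ha
  have ht_a : sub (meet a b⁻¹) a := aux_meet_sub_left _ _
  have ht_b : sub (meet a b⁻¹) b⁻¹ := aux_meet_sub_right _ _
  have hbt : sub (b * meet a b⁻¹) b := aux_push ht_b
  have H := aux_anti hbt hjba.1
  rw [show (b*a)⁻¹ * b = a⁻¹ by group,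
      show (b*a)⁻¹ * (b * meet a b⁻¹) = a⁻¹ * meet a b⁻¹ by group] at H
  have h5 : sub (a⁻¹ * meet a b⁻¹) a⁻¹ := aux_P1 ht_a
  have heq2 : a⁻¹ * meet a b⁻¹ = a⁻¹ := aux_sub_antisymm h5 H
  exact mul_left_cancel (heq2.trans (mul_one a⁻¹).symm)

lemma aux_perp_meet3 (hP : PerpGroup G) {a b c : G} (hab : meet a b = 1)
    (ha : sub a c) (hb : sub b c) : meet a⁻¹ b⁻¹ = 1 := by
  have hba : meet b a = 1 := by rw [meet_comm]; exact hab
  have hjab : isJoin a b (a*b) := aux_perp_join hP hab ha hb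
  have hjba : isJoin b a (b*a) := aux_perp_join hP hba hb ha
  have hcomm : a*b = b*a := aux_join_unique hjab (aux_isJoin_symm hjba)
  have ht_a : sub (meet a⁻¹ b⁻¹) a⁻¹ := aux_meet_sub_left _ _
  have ht_b : sub (meet a⁻¹ b⁻¹) b⁻¹ := aux_meet_sub_right _ _
  have hinv_a : sub a⁻¹ (b*a)⁻¹ := by
    have h := aux_P1 hjba.1
    rwa [show (b*a)⁻¹ * b = a⁻¹ by group] at h
  have hinv_b : sub b⁻¹ (a*b)⁻¹ := by
    have h := aux_P1 hjab.1
    rwa [show (a*b)⁻¹ * a = b⁻¹ by group] at h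
  have c1 := aux_anti ht_a hinv_a
  rw [inv_inv, show b*a*a⁻¹ = b by group] at c1
  have c2 := aux_anti ht_b hinv_b
  rw [inv_inv, show a*b*b⁻¹ = a by group] at c2
  rw [hcomm] at c2
  have hmin : sub (b*a) (b*a * meet a⁻¹ b⁻¹) := hjba.2.2 _ c1 c2
  have htop : sub (meet a⁻¹ b⁻¹) (b*a)⁻¹ := aux_sub_trans ht_a hinv_a
  have hdown : sub (b*a * meet a⁻¹ b⁻¹) (b*a) := aux_push htop
  have heq2 : b*a * meet a⁻¹ b⁻¹ = b*a := aux_sub_antisymm hdown hmin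
  exact mul_left_cancel (heq2.trans (mul_one (b*a)).symm)

lemma aux_D (hP : PerpGroup G) {t p q : G} (ht : sub t (p * q)) (hp : sub p (p * q))
    (htp : meet t p = 1) : sub t q := by
  have hpt : meet p t = 1 := by rw [meet_comm]; exact htp
  have hjpt : isJoin p t (p * t) := hP p t ⟨hpt, aux_hasJoin_of_bounded hp ht⟩
  have hsub : sub (p * t) (p * q) := hjpt.2.2 _ hp ht
  have H := aux_anti hjpt.1 hsub
  rw [show (p*q)⁻¹ * (p*t) = q⁻¹ * t by group, show (p*q)⁻¹ * p = q⁻¹ by group] at H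
  have H2 := inv_mul_antitone 1 (q⁻¹ * t) q⁻¹ (one_meet _) H
  rw [mul_one, show (q⁻¹)⁻¹ * (q⁻¹ * t) = t by group, inv_inv] at H2
  exact H2

lemma aux_T {m T u : G} (hmT : meet m⁻¹ T = 1) (hu : sub u T) : sub (m * u) (m * T) := by
  have h1 : sub (T⁻¹ * u) T⁻¹ := aux_P1 hu
  have h2 : sub T⁻¹ (T⁻¹ * m⁻¹) := aux_red_sub (by rw [inv_inv, meet_comm]; exact hmT)
  have h3 := aux_sub_trans h1 h2
  have H := inv_mul_antitone 1 (T⁻¹ * u) (T⁻¹ * m⁻¹) (one_meet _) h3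
  rw [mul_one, show (T⁻¹*m⁻¹)⁻¹ * (T⁻¹ * u) = m * u by group,
      show (T⁻¹*m⁻¹)⁻¹ = m * T by group] at H
  exact H

lemma aux_meetM {u v w j : G} (hu : sub u w) (hv : sub v w)
    (hj : isJoin (w⁻¹ * u) (w⁻¹ * v) j) : meet u v = w * j := by
  obtain ⟨hju, hjv, hjmin⟩ := hj
  have hjw : sub j w⁻¹ := hjmin w⁻¹ (aux_P1 hu) (aux_P1 hv)
  have h1 : sub (w * j) u := by
    have H := aux_anti hju hjw
    rw [inv_inv, show w * (w⁻¹*u) = u by group] at H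
    exact H
  have h2 : sub (w * j) v := by
    have H := aux_anti hjv hjw
    rw [inv_inv, show w * (w⁻¹*v) = v by group] at H
    exact H
  have hup : sub (w*j) (meet u v) := aux_sub_meet h1 h2
  have hku : sub (meet u v) u := aux_meet_sub_left _ _
  have hkv : sub (meet u v) v := aux_meet_sub_right _ _
  have hkw : sub (meet u v) w := aux_sub_trans hku hu
  have h3 : sub (w⁻¹ * u) (w⁻¹ * meet u v) := aux_anti hku hu
  have h4 : sub (w⁻¹ * v) (w⁻¹ * meet u v) := aux_anti hkv hv
  have h5 : sub (w⁻¹ * meet u v) w⁻¹ := aux_P1 hkw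
  have h6 : sub j (w⁻¹ * meet u v) := hjmin _ h3 h4
  have H := aux_anti h6 h5
  rw [inv_inv, show w * (w⁻¹ * meet u v) = meet u v by group] at H
  exact aux_sub_antisymm H hup


/-- Lemma 3.9: in a `⊥`-group satisfying A₁ and A₂, if
`xyz = x•y•z = z•y•x` (both triples reduced) and `x ∩ z = 1`, then `x`, `y`,
`z` pairwise commute. -/
theorem comm_of_reduced_triple {G : Type*} [MedianGroup G]
    (hP : PerpGroup G) (hA1 : A1 G) (hA2 : A2 G) (x y z : G)
    (heq : x * y * z = z * y * x)
    (hxy : meet x⁻¹ y = 1) (hxyz : meet (x * y)⁻¹ z = 1)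
    (hzy : meet z⁻¹ y = 1) (hzyx : meet (z * y)⁻¹ x = 1)
    (hxz : meet x z = 1) :
    x * y = y * x ∧ x * z = z * x ∧ y * z = z * y := by
  -- chains below w = x*y*z
  have sxy : sub x (x*y) := aux_red_sub hxy
  have sxyw : sub (x*y) (x*y*z) := aux_red_sub hxyz
  have szy : sub z (z*y) := aux_red_sub hzy
  have szyw : sub (z*y) (x*y*z) := by
    have h := aux_red_sub hzyx
    rwa [← heq] at h
  have sxw : sub x (x*y*z) := aux_sub_trans sxy sxyw
  have szw : sub z (x*y*z) := aux_sub_trans szy szyw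
  -- x ⊥ z
  have hzx1 : meet z x = 1 := by rw [meet_comm]; exact hxz
  have hjxz := aux_perp_join hP hxz sxw szw
  have hjzx := aux_perp_join hP hzx1 szw sxw
  have hcxz : x*z = z*x := aux_join_unique hjxz (aux_isJoin_symm hjzx)
  have hxinvz : meet x⁻¹ z = 1 := by
    rw [meet_comm]; exact aux_perp_meet1 hP hzx1 szw sxw
  have hxzinv : meet x z⁻¹ = 1 := aux_perp_meet1 hP hxz sxw szw
  have hinvinv : meet x⁻¹ z⁻¹ = 1 := aux_perp_meet3 hP hxz sxw szw
  -- inverse bounds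
  have sxiw : sub x⁻¹ (x*y*z)⁻¹ := by
    have h := aux_P1 szyw
    rwa [show (x*y*z)⁻¹ * (z*y) = x⁻¹ from by rw [heq]; group] at h
  have sziw : sub z⁻¹ (x*y*z)⁻¹ := by
    have h := aux_P1 sxyw
    rwa [show (x*y*z)⁻¹ * (x*y) = z⁻¹ from by group] at h
  have hii : meet z⁻¹ x⁻¹ = 1 := by rw [meet_comm]; exact hinvinv
  have hjzixi := aux_perp_join hP hii sziw sxiw
  have hjxizi := aux_perp_join hP hinvinv sxiw sziw
  have hinvcomm : x⁻¹*z⁻¹ = z⁻¹*x⁻¹ := aux_join_unique hjxizi (aux_isJoin_symm hjzixi)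
  -- m := xy ∩ zy and its conjugate identities
  have hmsub : sub (meet (x*y) (z*y)) y := hA2 x z y hxz hxy hzy
  have hjm : isJoin ((x*y*z)⁻¹*(x*y)) ((x*y*z)⁻¹*(z*y)) (z⁻¹*x⁻¹) := by
    rw [show (x*y*z)⁻¹*(x*y) = z⁻¹ from by group,
        show (x*y*z)⁻¹*(z*y) = x⁻¹ from by rw [heq]; group]
    exact hjzixi
  have hmW : meet (x*y) (z*y) = (x*y*z) * (z⁻¹*x⁻¹) := aux_meetM sxyw szyw hjm
  have hmx : meet (x*y) (z*y) = x*y*x⁻¹ := by rw [hmW]; group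
  have hmz : meet (x*y) (z*y) = z*y*z⁻¹ := by rw [hmW, ← hinvcomm, heq]; group
  have hmx_mul : meet (x*y) (z*y) * x = x*y := by rw [hmx]; group
  have hmz_mul : meet (x*y) (z*y) * z = z*y := by rw [hmz]; group
  -- reducedness of m against x, z on both sides
  have h8x : meet (meet (x*y) (z*y))⁻¹ x = 1 :=
    aux_red_of_sub (by rw [hmx_mul]; exact aux_meet_sub_left _ _)
  have h8z : meet (meet (x*y) (z*y))⁻¹ z = 1 :=
    aux_red_of_sub (by rw [hmz_mul]; exact aux_meet_sub_right _ _)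
  have h9x : meet x⁻¹ (meet (x*y) (z*y)) = 1 := by
    apply aux_meet_one
    have h1 : sub (meet x⁻¹ (meet (x*y) (z*y))) (meet x⁻¹ y) :=
      aux_sub_meet (aux_meet_sub_left _ _) (aux_sub_trans (aux_meet_sub_right _ _) hmsub)
    rwa [hxy] at h1
  have h9z : meet z⁻¹ (meet (x*y) (z*y)) = 1 := by
    apply aux_meet_one
    have h1 : sub (meet z⁻¹ (meet (x*y) (z*y))) (meet z⁻¹ y) :=
      aux_sub_meet (aux_meet_sub_left _ _) (aux_sub_trans (aux_meet_sub_right _ _) hmsub)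
    rwa [hzy] at h1
  -- x*m, z*m sit below w
  have sxm_w : sub (x * meet (x*y) (z*y)) (x*y*z) :=
    aux_sub_trans (aux_T hxy hmsub) sxyw
  have szm_w : sub (z * meet (x*y) (z*y)) (x*y*z) :=
    aux_sub_trans (aux_T hzy hmsub) szyw
  have smw : sub (meet (x*y) (z*y)) (x*y*z) := aux_sub_trans (aux_meet_sub_left _ _) sxyw
  -- m ⊂ x*m and m ⊂ z*m  (A1)
  have h11x : sub (meet (x*y) (z*y)) (x * meet (x*y) (z*y)) := by
    apply hA1 _ _ (aux_hasJoin_of_bounded smw sxm_w)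
    have h : sub (meet (x*y) (z*y))⁻¹ ((meet (x*y) (z*y))⁻¹ * x⁻¹) :=
      aux_red_sub (by rw [inv_inv, meet_comm]; exact h9x)
    rwa [← mul_inv_rev] at h
  have h11z : sub (meet (x*y) (z*y)) (z * meet (x*y) (z*y)) := by
    apply hA1 _ _ (aux_hasJoin_of_bounded smw szm_w)
    have h : sub (meet (x*y) (z*y))⁻¹ ((meet (x*y) (z*y))⁻¹ * z⁻¹) :=
      aux_red_sub (by rw [inv_inv, meet_comm]; exact h9z)
    rwa [← mul_inv_rev] at h
  -- A2 at level 2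
  have h12 : meet (x * meet (x*y) (z*y)) (z * meet (x*y) (z*y)) = meet (x*y) (z*y) :=
    aux_sub_antisymm (hA2 x z (meet (x*y) (z*y)) hxz h9x h9z) (aux_sub_meet h11x h11z)
  -- reducedness of (x*m, z) and (z*m, x)
  have h13a : meet (x * meet (x*y) (z*y))⁻¹ z = 1 := by
    rw [mul_inv_rev]
    apply aux_meet_one
    have ht1 : sub (meet ((meet (x*y) (z*y))⁻¹ * x⁻¹) z) ((meet (x*y) (z*y))⁻¹ * x⁻¹) :=
      aux_meet_sub_left _ _
    have ht2 : sub (meet ((meet (x*y) (z*y))⁻¹ * x⁻¹) z) z := aux_meet_sub_right _ _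
    have hpq : sub (meet (x*y) (z*y))⁻¹ ((meet (x*y) (z*y))⁻¹ * x⁻¹) :=
      aux_red_sub (by rw [inv_inv, meet_comm]; exact h9x)
    have htm : meet (meet ((meet (x*y) (z*y))⁻¹ * x⁻¹) z) (meet (x*y) (z*y))⁻¹ = 1 := by
      apply aux_meet_one
      have h := aux_sub_meet (aux_sub_trans (aux_meet_sub_left _ _) ht2)
        (aux_meet_sub_right (meet ((meet (x*y) (z*y))⁻¹ * x⁻¹) z) (meet (x*y) (z*y))⁻¹)
      rwa [meet_comm z (meet (x*y) (z*y))⁻¹, h8z] at h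
    have htq := aux_D hP ht1 hpq htm
    have h := aux_sub_meet htq ht2
    rwa [hxinvz] at h
  
  have h13b : meet (z * meet (x*y) (z*y))⁻¹ x = 1 := by
    rw [mul_inv_rev]
    apply aux_meet_one
    have ht1 : sub (meet ((meet (x*y) (z*y))⁻¹ * z⁻¹) x) ((meet (x*y) (z*y))⁻¹ * z⁻¹) :=
      aux_meet_sub_left _ _
    have ht2 : sub (meet ((meet (x*y) (z*y))⁻¹ * z⁻¹) x) x := aux_meet_sub_right _ _
    have hpq : sub (meet (x*y) (z*y))⁻¹ ((meet (x*y) (z*y))⁻¹ * z⁻¹) :=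
      aux_red_sub (by rw [inv_inv, meet_comm]; exact h9z)
    have htm : meet (meet ((meet (x*y) (z*y))⁻¹ * z⁻¹) x) (meet (x*y) (z*y))⁻¹ = 1 := by
      apply aux_meet_one
      have h := aux_sub_meet (aux_sub_trans (aux_meet_sub_left _ _) ht2)
        (aux_meet_sub_right (meet ((meet (x*y) (z*y))⁻¹ * z⁻¹) x) (meet (x*y) (z*y))⁻¹)
      rwa [meet_comm x (meet (x*y) (z*y))⁻¹, h8x] at h
    have htq := aux_D hP ht1 hpq htm
    have h := aux_sub_meet ht2 htq
    rwa [hxzinv] at h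
  -- the element W₂ = x*m*z = z*m*x
  have hWzeq : x * meet (x*y) (z*y) * z = z * meet (x*y) (z*y) * x := by
    have l : x * meet (x*y) (z*y) * z = x*z*y := by rw [hmz]; group
    have r : z * meet (x*y) (z*y) * x = z*x*y := by rw [hmx]; group
    rw [l, r, hcxz]
  have sxm_W : sub (x * meet (x*y) (z*y)) (x * meet (x*y) (z*y) * z) := aux_red_sub h13a
  have szm_W : sub (z * meet (x*y) (z*y)) (x * meet (x*y) (z*y) * z) := by
    have h := aux_red_sub h13b
    rwa [← hWzeq] at h
  have hjm2 : isJoin ((x * meet (x*y) (z*y) * z)⁻¹ * (x * meet (x*y) (z*y)))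
      ((x * meet (x*y) (z*y) * z)⁻¹ * (z * meet (x*y) (z*y))) (z⁻¹*x⁻¹) := by
    rw [show (x * meet (x*y) (z*y) * z)⁻¹ * (x * meet (x*y) (z*y)) = z⁻¹ from by group,
        show (x * meet (x*y) (z*y) * z)⁻¹ * (z * meet (x*y) (z*y)) = x⁻¹ from by
          rw [hWzeq]; group]
    exact hjzixi
  have hm2 : meet (x * meet (x*y) (z*y)) (z * meet (x*y) (z*y)) =
      (x * meet (x*y) (z*y) * z) * (z⁻¹*x⁻¹) := aux_meetM sxm_W szm_W hjm2
  have hm2x : meet (x * meet (x*y) (z*y)) (z * meet (x*y) (z*y)) =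
      x * meet (x*y) (z*y) * x⁻¹ := by rw [hm2]; group
  have hm2z : meet (x * meet (x*y) (z*y)) (z * meet (x*y) (z*y)) =
      z * meet (x*y) (z*y) * z⁻¹ := by rw [hm2, ← hinvcomm, hWzeq]; group
  -- conclude
  have hx_conj : x * meet (x*y) (z*y) * x⁻¹ = meet (x*y) (z*y) := by rw [← hm2x]; exact h12
  have hz_conj : z * meet (x*y) (z*y) * z⁻¹ = meet (x*y) (z*y) := by rw [← hm2z]; exact h12
  have hxmmx : x * meet (x*y) (z*y) = meet (x*y) (z*y) * x := by
    calc x * meet (x*y) (z*y) = (x * meet (x*y) (z*y) * x⁻¹) * x := by group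
    _ = meet (x*y) (z*y) * x := by rw [hx_conj]
  have hzmmz : z * meet (x*y) (z*y) = meet (x*y) (z*y) * z := by
    calc z * meet (x*y) (z*y) = (z * meet (x*y) (z*y) * z⁻¹) * z := by group
    _ = meet (x*y) (z*y) * z := by rw [hz_conj]
  have hyM : y = meet (x*y) (z*y) := by
    have h : x*y = x * meet (x*y) (z*y) := by rw [hxmmx, hmx_mul]
    exact mul_left_cancel h
  refine ⟨?_, hcxz, ?_⟩
  · calc x*y = x * meet (x*y) (z*y) := by rw [← hyM]
    _ = meet (x*y) (z*y) * x := hxmmx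
    _ = y * x := by rw [← hyM]
  · calc y*z = meet (x*y) (z*y) * z := by rw [← hyM]
    _ = z * meet (x*y) (z*y) := hzmmz.symm
    _ = z * y := by rw [← hyM]


end MedianGroup
end ArtinMedian
end
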